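/- Let I₀, I₁ : ℝ^d → [0,∞) be measurable densities and let f₁ : ℝ^d → ℝ^d be measurable with Measure.map f₁ (volume.withDensity I₀) = volume.withDensity I₁, and suppose f₁(x) = ∇φ₁(x) for all x, where φ₁ : ℝ^d → ℝ is convex and differentiable. Fix σ > 0 and define the scaled density I_σ(y) = σ^d · I₁(σ·y). Then the map f_σ(x) = f₁(x)/σ satisfies Measure.map f_σ (volume.withDensity I₀) = volume.withDensity I_σ; moreover f_σ is the gradient of the convex differentiable function x ↦ φ₁(x)/σ; and consequently the LOT transform of I_σ with respect to I₀ satisfies Î_σ(x) = (f_σ(x) − x)·√(I₀(x)) = (1/σ)·(Î₁(x) − (σ − 1)·x·√(I₀(x))) for all x, where Î₁(x) = (f₁(x) − x)·√(I₀(x)). -/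

import Mathlib

/-!
`x ↦ f₁ x / σ` is `f₁` followed by the dilation `y ↦ σ⁻¹ • y`, so it pushes `I₀` forward to the
image of `I₁` under that dilation; since the dilation scales Lebesgue measure by `σ⁻ᵈ`, this image
has density `σᵈ I₁(σ y)`.
-/

open MeasureTheory

theorem MeasurableEquiv.map_withDensity {α β : Type*} [MeasurableSpace α] [MeasurableSpace β]
    (e : α ≃ᵐ β) (μ : Measure α) (g : α → ENNReal) :
    (μ.withDensity g).map e = (μ.map e).withDensity (g ∘ e.symm) := by
  ext s hs
  rw [e.map_apply, withDensity_apply _ (e.measurable hs), withDensity_apply _ hs,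
    e.restrict_map, lintegral_map_equiv]
  simp

theorem MeasureTheory.Measure.map_inv_smul_withDensity {E : Type*} [NormedAddCommGroup E]
    [NormedSpace ℝ E] [MeasurableSpace E] [BorelSpace E] [FiniteDimensional ℝ E]
    (μ : Measure E) [μ.IsAddHaarMeasure] {σ : ℝ} (hσ : σ ≠ 0) (g : E → ENNReal) :
    (μ.withDensity g).map (fun x => σ⁻¹ • x) =
      μ.withDensity fun y => ENNReal.ofReal (|σ| ^ Module.finrank ℝ E) * g (σ • y) := by
  have h := (MeasurableEquiv.smul₀ σ⁻¹ (inv_ne_zero hσ) : E ≃ᵐ E).map_withDensity μ g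
  rw [MeasurableEquiv.symm_smul₀, MeasurableEquiv.coe_smul₀, MeasurableEquiv.coe_smul₀, inv_inv,
    Measure.map_addHaar_smul μ (inv_ne_zero hσ), withDensity_smul_measure,
    ← withDensity_smul' _ _ ENNReal.ofReal_ne_top] at h
  rw [h, inv_pow, inv_inv, abs_pow]
  rfl

theorem HasGradientAt.div_const {F : Type*} [NormedAddCommGroup F] [InnerProductSpace ℝ F]
    [CompleteSpace F] {f : F → ℝ} {f' x : F} (hf : HasGradientAt f f' x) (c : ℝ) :
    HasGradientAt (fun x => f x / c) (c⁻¹ • f') x := by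
  rw [hasGradientAt_iff_hasFDerivAt] at hf ⊢
  simpa [div_eq_mul_inv] using hf.mul_const c⁻¹

theorem lot_scaling_general
    (d : ℕ) (I₀ I₁ : EuclideanSpace ℝ (Fin d) → ℝ)
    (f₁ : EuclideanSpace ℝ (Fin d) → EuclideanSpace ℝ (Fin d))
    (hf₁ : Measurable f₁)
    (hmap : Measure.map f₁ (volume.withDensity fun x => ENNReal.ofReal (I₀ x))
      = volume.withDensity fun x => ENNReal.ofReal (I₁ x))
    (φ₁ : EuclideanSpace ℝ (Fin d) → ℝ)
    (hφ₁conv : ConvexOn ℝ Set.univ φ₁) (hφ₁diff : Differentiable ℝ φ₁)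
    (hgrad : ∀ x, f₁ x = gradient φ₁ x)
    (σ : ℝ) (hσ : 0 < σ) :
    (Measure.map (fun x => σ⁻¹ • f₁ x)
        (volume.withDensity fun x => ENNReal.ofReal (I₀ x))
      = volume.withDensity fun y => ENNReal.ofReal (σ ^ d * I₁ (σ • y))) ∧
    (ConvexOn ℝ Set.univ (fun x => φ₁ x / σ) ∧
      Differentiable ℝ (fun x => φ₁ x / σ) ∧
      ∀ x, σ⁻¹ • f₁ x = gradient (fun x => φ₁ x / σ) x) ∧
    (∀ x, Real.sqrt (I₀ x) • (σ⁻¹ • f₁ x - x)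
      = σ⁻¹ • (Real.sqrt (I₀ x) • (f₁ x - x) - (σ - 1) • (Real.sqrt (I₀ x) • x))) := by
  refine ⟨?_, ⟨?_, fun x => ((hφ₁diff x).hasGradientAt.div_const σ).differentiableAt,
    fun x => ?_⟩, fun x => ?_⟩
  · rw [← Function.comp_def (fun y => σ⁻¹ • y) f₁,
      ← Measure.map_map (measurable_const_smul σ⁻¹) hf₁, hmap,
      Measure.map_inv_smul_withDensity volume hσ.ne', finrank_euclideanSpace_fin, abs_of_pos hσ]
    simp_rw [← ENNReal.ofReal_mul (pow_nonneg hσ.le d)]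
  · simpa only [div_eq_inv_mul, smul_eq_mul] using hφ₁conv.smul (inv_nonneg.2 hσ.le)
  · rw [hgrad, ((hφ₁diff x).hasGradientAt.div_const σ).gradient]
  · match_scalars <;> field_simp
    ring

/-- Scaling property of the LOT transform: if `f₁ = ∇φ₁` transports `I₀` onto
`I₁` and `σ > 0`, then `f_σ = f₁ / σ` transports `I₀` onto the scaled density
`I_σ(y) = σ^d I₁(σ y)`, it is the gradient of the convex differentiable
potential `x ↦ φ₁(x)/σ`, and the LOT transform satisfies
`Î_σ(x) = (1/σ)(Î₁(x) - (σ - 1) x √(I₀ x))`. -/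
theorem lot_scaling
    (d : ℕ) (I₀ I₁ : EuclideanSpace ℝ (Fin d) → ℝ)
    (hI₀m : Measurable I₀) (hI₁m : Measurable I₁)
    (hI₀nonneg : ∀ x, 0 ≤ I₀ x) (hI₁nonneg : ∀ x, 0 ≤ I₁ x)
    (f₁ : EuclideanSpace ℝ (Fin d) → EuclideanSpace ℝ (Fin d))
    (hf₁ : Measurable f₁)
    (hmap : Measure.map f₁ (volume.withDensity fun x => ENNReal.ofReal (I₀ x))
      = volume.withDensity fun x => ENNReal.ofReal (I₁ x))
    (φ₁ : EuclideanSpace ℝ (Fin d) → ℝ)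
    (hφ₁conv : ConvexOn ℝ Set.univ φ₁) (hφ₁diff : Differentiable ℝ φ₁)
    (hgrad : ∀ x, f₁ x = gradient φ₁ x)
    (σ : ℝ) (hσ : 0 < σ) :
    (Measure.map (fun x => σ⁻¹ • f₁ x)
        (volume.withDensity fun x => ENNReal.ofReal (I₀ x))
      = volume.withDensity fun y => ENNReal.ofReal (σ ^ d * I₁ (σ • y))) ∧
    (ConvexOn ℝ Set.univ (fun x => φ₁ x / σ) ∧
      Differentiable ℝ (fun x => φ₁ x / σ) ∧
      ∀ x, σ⁻¹ • f₁ x = gradient (fun x => φ₁ x / σ) x) ∧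
    (∀ x, Real.sqrt (I₀ x) • (σ⁻¹ • f₁ x - x)
      = σ⁻¹ • (Real.sqrt (I₀ x) • (f₁ x - x) - (σ - 1) • (Real.sqrt (I₀ x) • x))) :=
  lot_scaling_general d I₀ I₁ f₁ hf₁ hmap φ₁ hφ₁conv hφ₁diff hgrad σ hσ
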